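/- arXiv:2204.02879 — 4 statements merged into one kernel-verified Lean document; each statement's English description precedes it below -/
import Mathlib

section
/- For each fixed d ≥ 1, the generating function Σ_λ t^{dif_d(λ)} x^{Γ(λ)}, summed over all nonempty integer partitions, equals x / (1 − x − tx(1 − x^d) − x^{d+1}). -/
/-- A partition: a nonempty weakly decreasing list of positive integers. -/
def IsPartition (l : List ℕ) : Prop :=
  l ≠ [] ∧ l.Pairwise (· ≥ ·) ∧ ∀ x ∈ l, 0 < x

/-- The perimeter of a partition: largest part plus number of parts minus 1. -/
def perim (l : List ℕ) : ℕ := l.headI + l.length - 1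

/-- Number of repeated parts: indices i with λ_i = λ_{i+1}. -/
def repStat (l : List ℕ) : ℕ :=
  ((List.range (l.length - 1)).filter fun i => l.getD i 0 = l.getD (i + 1) 0).length

/-- Number of even parts. -/
def evenStat (l : List ℕ) : ℕ := l.countP fun x => x % 2 = 0

/-- dif_d(λ): number of indices i with λ_i − λ_{i+1} < d. -/
def difStat (d : ℕ) (l : List ℕ) : ℕ :=
  ((List.range (l.length - 1)).filter fun i => l.getD i 0 - l.getD (i + 1) 0 < d).length

/-- mod′_d(λ): number of parts not congruent to 1 mod d+1. -/
def modStat (d : ℕ) (l : List ℕ) : ℕ := l.countP fun x => ¬ x % (d + 1) = 1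

/-!
Removing the largest part of a partition with at least two parts leaves a partition `μ`; if the
removed part exceeds `μ₁` by `g`, the perimeter drops by `g + 1` and `dif_d` drops by one exactly
when `g < d`. With `W = ∑_{g ≥ 0} t^[g < d] x^(g+1)` and the one-part partitions contributing
`x / (1 - x)`, the generating function `A` satisfies `A = x / (1 - x) + W A`, and multiplying by
`1 - x` gives the claim since `(1 - x) W = t x (1 - x^d) + x^(d+1)`.
-/

open PowerSeries
open scoped Polynomial

lemma isPartition_cons {a : ℕ} {m : List ℕ} (hm : m ≠ []) :
    IsPartition (a :: m) ↔ IsPartition m ∧ m.headI ≤ a := by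
  obtain ⟨b, r, rfl⟩ := List.exists_cons_of_ne_nil hm
  simp only [IsPartition, List.pairwise_cons, List.mem_cons, forall_eq_or_imp, List.headI_cons]
  constructor
  · rintro ⟨-, ⟨⟨hba, -⟩, hr⟩, -, hpos⟩
    exact ⟨⟨by simp, hr, hpos⟩, hba⟩
  · rintro ⟨⟨-, ⟨hrb, hr⟩, hpos⟩, hba⟩
    exact ⟨by simp, ⟨⟨hba, fun x hx => (hrb x hx).trans hba⟩, hrb, hr⟩,
      by have := hpos.1; omega, hpos⟩

namespace IsPartition

variable {l : List ℕ}

lemma le_headI (h : IsPartition l) {x : ℕ} (hx : x ∈ l) : x ≤ l.headI := by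
  obtain ⟨a, m, rfl⟩ := List.exists_cons_of_ne_nil h.1
  rcases List.mem_cons.1 hx with rfl | hx
  · exact le_rfl
  · exact (List.pairwise_cons.1 h.2.1).1 x hx

lemma headI_pos (h : IsPartition l) : 0 < l.headI := by
  obtain ⟨a, m, rfl⟩ := List.exists_cons_of_ne_nil h.1
  exact h.2.2 a List.mem_cons_self

lemma le_perim (h : IsPartition l) {x : ℕ} (hx : x ∈ l) : x ≤ perim l := by
  have := h.le_headI hx
  have := List.length_pos_iff.2 h.1
  unfold perim; omega

lemma length_le_perim (h : IsPartition l) : l.length ≤ perim l := by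
  have := h.headI_pos
  unfold perim; omega

end IsPartition

lemma perim_singleton (a : ℕ) : perim [a] = a := rfl

lemma perim_cons_headI_add {m : List ℕ} (hm : m ≠ []) (g : ℕ) :
    perim ((m.headI + g) :: m) = g + 1 + perim m := by
  have := List.length_pos_iff.2 hm
  simp only [perim, List.headI_cons, List.length_cons]
  omega

lemma difStat_cons_headI_add (d : ℕ) {m : List ℕ} (hm : m ≠ []) (g : ℕ) :
    difStat d ((m.headI + g) :: m) = (if g < d then 1 else 0) + difStat d m := by
  obtain ⟨b, r, rfl⟩ := List.exists_cons_of_ne_nil hm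
  simp only [difStat, List.length_cons, Nat.add_sub_cancel, List.range_succ_eq_map,
    List.filter_cons, List.filter_map, List.getD_cons_zero, List.getD_cons_succ, List.headI_cons,
    Nat.add_sub_cancel_left]
  by_cases hg : g < d <;> simp [hg, Function.comp_def, add_comm]

lemma finite_setOf_isPartition_perim (n : ℕ) :
    {l | IsPartition l ∧ perim l = n}.Finite := by
  refine ((List.finite_length_le (Fin (n + 1)) n).image (List.map Fin.val)).subset ?_
  rintro l ⟨hl, hn⟩
  have hlen : l.length ≤ n := hn ▸ hl.length_le_perim
  have hlt : ∀ x ∈ l, x < n + 1 := fun x hx => Nat.lt_succ_of_le (hn ▸ hl.le_perim hx)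
  lift l to List (Fin (n + 1)) using hlt
  exact ⟨l, by simpa using hlen, rfl⟩

noncomputable def partitionsOfPerim (n : ℕ) : Finset (List ℕ) :=
  (finite_setOf_isPartition_perim n).toFinset

@[simp] lemma mem_partitionsOfPerim {n : ℕ} {l : List ℕ} :
    l ∈ partitionsOfPerim n ↔ IsPartition l ∧ perim l = n :=
  Set.Finite.mem_toFinset _

lemma filter_tail_eq_nil_partitionsOfPerim (n : ℕ) :
    (partitionsOfPerim n).filter (·.tail = []) = if n = 0 then ∅ else {[n]} := by
  ext l
  rcases l with _ | ⟨a, _ | ⟨b, r⟩⟩ <;> split_ifs with hn <;>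
    simp [perim_singleton, IsPartition] <;> omega

section GeneratingFunction

variable (d : ℕ)

noncomputable def difGenFun : PowerSeries ℤ[X] :=
  mk fun n => ∑ l ∈ partitionsOfPerim n, Polynomial.X ^ difStat d l

noncomputable def gapWeight : PowerSeries ℤ[X] :=
  mk fun i => if i = 0 then 0 else if i ≤ d then Polynomial.X else 1

lemma sum_filter_tail_ne_nil_partitionsOfPerim (n : ℕ) :
    ∑ l ∈ (partitionsOfPerim n).filter (·.tail ≠ []), (Polynomial.X : ℤ[X]) ^ difStat d l =
      coeff n (gapWeight d * difGenFun d) := by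
  simp only [coeff_mul, gapWeight, difGenFun, coeff_mk, Finset.mul_sum]
  rw [Finset.sum_sigma']
  symm
  refine Finset.sum_bij_ne_zero (fun x _ _ => (x.2.headI + (x.1.1 - 1)) :: x.2) ?_ ?_ ?_ ?_
  · rintro ⟨⟨g, j⟩, m⟩ hx hne
    simp only [Finset.mem_sigma, Finset.HasAntidiagonal.mem_antidiagonal,
      mem_partitionsOfPerim] at hx
    obtain ⟨rfl, hm, rfl⟩ := hx
    have hg : g ≠ 0 := by rintro rfl; simp at hne
    simp only [Finset.mem_filter, mem_partitionsOfPerim, isPartition_cons hm.1,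
      perim_cons_headI_add hm.1]
    exact ⟨⟨⟨hm, by omega⟩, by omega⟩, hm.1⟩
  · rintro ⟨⟨g, j⟩, m⟩ hx hne ⟨⟨g', j'⟩, m'⟩ hx' hne' heq
    simp only [Finset.mem_sigma, mem_partitionsOfPerim] at hx hx'
    dsimp only at hne hne' heq
    have hg : g ≠ 0 := by rintro rfl; simp at hne
    have hg' : g' ≠ 0 := by rintro rfl; simp at hne'
    obtain ⟨hhead, rfl⟩ := List.cons_eq_cons.1 heq
    obtain rfl : g = g' := by omega
    obtain rfl : j = j' := hx.2.2.symm.trans hx'.2.2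
    rfl
  · rintro l hl -
    simp only [Finset.mem_filter, mem_partitionsOfPerim] at hl
    obtain ⟨⟨hpart, rfl⟩, htail⟩ := hl
    obtain ⟨a, m, rfl⟩ := List.exists_cons_of_ne_nil hpart.1
    simp only [List.tail_cons] at htail
    obtain ⟨hm, hma⟩ := (isPartition_cons htail).1 hpart
    obtain ⟨g, rfl⟩ := Nat.exists_eq_add_of_le hma
    refine ⟨⟨(g + 1, perim m), m⟩, ?_, ?_, by simp⟩
    · simp [perim_cons_headI_add htail, hm]
    · dsimp only
      split_ifs <;> simp_all [Polynomial.X_ne_zero]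
  · rintro ⟨⟨g, j⟩, m⟩ hx hne
    simp only [Finset.mem_sigma, mem_partitionsOfPerim] at hx
    dsimp only at hne ⊢
    have hg : g ≠ 0 := by rintro rfl; simp at hne
    rw [difStat_cons_headI_add d hx.2.1.1, pow_add]
    split_ifs <;> first | omega | simp

lemma difGenFun_eq : difGenFun d = X * mk 1 + gapWeight d * difGenFun d := by
  ext n : 1
  rw [map_add, ← sum_filter_tail_ne_nil_partitionsOfPerim, difGenFun, coeff_mk,
    ← Finset.sum_filter_add_sum_filter_not _ (·.tail = []), filter_tail_eq_nil_partitionsOfPerim]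
  congr 1
  rcases n with _ | n
  · simp
  · simp [coeff_succ_X_mul, difStat]

lemma gapWeight_mul_one_sub :
    gapWeight d * (1 - X) = C Polynomial.X * X * (1 - X ^ d) + X ^ (d + 1) := by
  rw [show C (Polynomial.X : ℤ[X]) * X * (1 - X ^ d) =
      C Polynomial.X * X - C Polynomial.X * X ^ (d + 1) by ring]
  ext n : 1
  rcases n with _ | n
  · simp [gapWeight]
  · simp only [gapWeight, mul_sub, mul_one, map_add, map_sub, coeff_C_mul, coeff_C, coeff_X_pow,
      coeff_succ_mul_X, coeff_mk]
    split_ifs <;> simp_all <;> first | omega | ring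

end GeneratingFunction

theorem gen_fun_dif_general (d : ℕ) :
    letI t : Polynomial ℤ := Polynomial.X
    (PowerSeries.mk fun n =>
        ∑ᶠ l ∈ {l : List ℕ | IsPartition l ∧ perim l = n}, t ^ difStat d l) *
      (1 - PowerSeries.X - PowerSeries.C t * PowerSeries.X * (1 - PowerSeries.X ^ d)
         - PowerSeries.X ^ (d + 1)) = PowerSeries.X := by
  have hA : (mk fun n => ∑ᶠ l ∈ {l : List ℕ | IsPartition l ∧ perim l = n},
      (Polynomial.X : ℤ[X]) ^ difStat d l) = difGenFun d := by
    ext n : 1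
    rw [coeff_mk, difGenFun, coeff_mk,
      finsum_mem_eq_finite_toFinset_sum _ (finite_setOf_isPartition_perim n)]
    rfl
  rw [hA]
  linear_combination (1 - X) * difGenFun_eq d + X * mk_one_mul_one_sub_eq_one ℤ[X] +
    difGenFun d * gapWeight_mul_one_sub d

theorem gen_fun_dif (d : ℕ) (hd : 1 ≤ d) :
    letI t : Polynomial ℤ := Polynomial.X
    (PowerSeries.mk fun n =>
        ∑ᶠ l ∈ {l : List ℕ | IsPartition l ∧ perim l = n}, t ^ difStat d l) *
      (1 - PowerSeries.X - PowerSeries.C t * PowerSeries.X * (1 - PowerSeries.X ^ d)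
         - PowerSeries.X ^ (d + 1)) = PowerSeries.X :=
  gen_fun_dif_general d
end

section
/- For each fixed d ≥ 1, the generating function Σ_λ t^{mod'_d(λ)} x^{Γ(λ)}, summed over all nonempty integer partitions, equals x(tx^{d+1} + (1−tx)^d(x−1)) / ((1−x−tx)((1−tx)^d(x−1) + x^{d+1})). -/
/-!
Split a partition by its largest part `m`: the remaining `ℓ - 1 = Γ - m` parts form a multiset
drawn from `{1, …, m}`. With the weight `w a = 1` for `a ≡ 1 (mod d + 1)` and `w a = t`
otherwise, the partitions with largest part `m` contribute
`Q m = w m • xᵐ / ∏_{a ≤ m} (1 - w a • x)`.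
As `w` has period `d + 1`, `B • Q (m + d + 1) = x^(d+1) • Q m` for `B = (1 - x)(1 - tx)^d`, so the
whole series `F = ∑ Q m` satisfies `F (B - x^(d+1)) = B (Q 1 + ⋯ + Q (d + 1))`. The right-hand side
is `x (1 - tx)^d` plus `t x²` times a geometric sum in `x` and `1 - tx`, whence the closed form.
Identities involving `F` are checked modulo `x^N` for every `N`, against the partial sums of `F`.
-/

open PowerSeries Finset

def boundedPartitions (m j : ℕ) : Set (List ℕ) :=
  {l | l.Pairwise (· ≥ ·) ∧ l.length = j ∧ ∀ x ∈ l, 0 < x ∧ x ≤ m}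

theorem cons_mem_boundedPartitions_iff {a m j : ℕ} {l : List ℕ} :
    a :: l ∈ boundedPartitions m (j + 1) ↔ 0 < a ∧ a ≤ m ∧ l ∈ boundedPartitions a j := by
  simp only [boundedPartitions, Set.mem_ofPred_eq, List.pairwise_cons, List.length_cons,
    List.mem_cons, forall_eq_or_imp, Nat.add_right_cancel_iff]
  grind

theorem boundedPartitions_zero_right (m : ℕ) : boundedPartitions m 0 = {[]} := by
  ext l
  simp only [boundedPartitions, Set.mem_ofPred_eq, List.length_eq_zero_iff, Set.mem_singleton_iff]
  constructor
  · exact fun h => h.2.1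
  · rintro rfl
    simp

theorem boundedPartitions_zero_succ (j : ℕ) : boundedPartitions 0 (j + 1) = ∅ := by
  ext (_ | ⟨a, l⟩)
  · simp [boundedPartitions]
  · simp only [cons_mem_boundedPartitions_iff, Set.mem_empty_iff_false, iff_false]
    omega

theorem boundedPartitions_succ_succ (m j : ℕ) :
    boundedPartitions (m + 1) (j + 1) =
      boundedPartitions m (j + 1) ∪ List.cons (m + 1) '' boundedPartitions (m + 1) j := by
  ext (_ | ⟨a, l⟩)
  · simp [boundedPartitions]
  · simp only [Set.mem_union, Set.mem_image, List.cons.injEq, cons_mem_boundedPartitions_iff]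
    grind

theorem finite_boundedPartitions : ∀ m j, (boundedPartitions m j).Finite
  | m, 0 => by simp [boundedPartitions_zero_right]
  | 0, j + 1 => by simp [boundedPartitions_zero_succ]
  | m + 1, j + 1 => by
    rw [boundedPartitions_succ_succ]
    exact (finite_boundedPartitions m (j + 1)).union
      ((finite_boundedPartitions (m + 1) j).image _)

theorem isPartition_cons_iff {a : ℕ} {l : List ℕ} :
    IsPartition (a :: l) ↔ 0 < a ∧ l ∈ boundedPartitions a l.length := by
  simp only [IsPartition, boundedPartitions, Set.mem_ofPred_eq, List.pairwise_cons,
    List.mem_cons, forall_eq_or_imp]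
  grind

theorem setOf_isPartition_perim_eq (n : ℕ) :
    {l | IsPartition l ∧ perim l = n} =
      ⋃ k ∈ (range n : Set ℕ), List.cons (k + 1) '' boundedPartitions (k + 1) (n - (k + 1)) := by
  ext (_ | ⟨_ | k, l⟩)
  · simp [IsPartition]
  · simp [isPartition_cons_iff]
  · simp only [Set.mem_ofPred_eq, isPartition_cons_iff, perim, List.headI, List.length_cons,
      lt_add_iff_pos_left, Order.lt_add_one_iff, zero_le, true_and, Nat.add_succ_sub_one,
      coe_range, Set.mem_Iio, Set.mem_iUnion, Set.mem_image, List.cons.injEq,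
      Nat.add_right_cancel_iff, exists_eq_right_right, exists_and_left, exists_prop]
    constructor
    · rintro ⟨hl, rfl⟩
      exact ⟨by rwa [Nat.add_sub_cancel_left], by omega⟩
    · rintro ⟨hl, hk⟩
      have hlen : l.length = n - (k + 1) := hl.2.1
      exact ⟨hlen ▸ hl, by omega⟩

section CompleteHomogeneous

variable {R : Type*} [CommSemiring R] (w : ℕ → R)

/-- The complete homogeneous symmetric polynomial `h_j` evaluated at `w 1, …, w m`. -/
def completeHom : ℕ → ℕ → R
  | _, 0 => 1
  | 0, _ + 1 => 0
  | m + 1, j + 1 => completeHom m (j + 1) + w (m + 1) * completeHom (m + 1) j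

theorem finsum_boundedPartitions_prod :
    ∀ m j, ∑ᶠ l ∈ boundedPartitions m j, (l.map w).prod = completeHom w m j
  | m, 0 => by simp [boundedPartitions_zero_right, completeHom]
  | 0, j + 1 => by simp [boundedPartitions_zero_succ, completeHom]
  | m + 1, j + 1 => by
    have hdisj : Disjoint (boundedPartitions m (j + 1))
        (List.cons (m + 1) '' boundedPartitions (m + 1) j) := by
      rw [Set.disjoint_right]
      rintro _ ⟨l, -, rfl⟩
      simp [cons_mem_boundedPartitions_iff]
    rw [boundedPartitions_succ_succ, finsum_mem_union hdisj (finite_boundedPartitions _ _)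
      ((finite_boundedPartitions _ _).image _), finsum_mem_image List.cons_injective.injOn,
      completeHom, finsum_boundedPartitions_prod m (j + 1),
      ← finsum_boundedPartitions_prod (m + 1) j,
      mul_finsum_mem' _ _ (finite_boundedPartitions _ _)]
    simp only [List.map_cons, List.prod_cons]

theorem finsum_partitions_perim_prod (n : ℕ) :
    ∑ᶠ l ∈ {l | IsPartition l ∧ perim l = n}, (l.map w).prod =
      ∑ k ∈ range n, w (k + 1) * completeHom w (k + 1) (n - (k + 1)) := by
  have hdisj : (range n : Set ℕ).PairwiseDisjoint
      fun k => List.cons (k + 1) '' boundedPartitions (k + 1) (n - (k + 1)) := by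
    intro a _ b _ hab
    simp only [Function.onFun, Set.disjoint_left]
    rintro _ ⟨_, _, rfl⟩ ⟨_, _, h⟩
    simp only [List.cons.injEq, Nat.add_right_cancel_iff] at h
    exact hab h.1.symm
  rw [setOf_isPartition_perim_eq, finsum_mem_biUnion hdisj (finite_toSet _)
    fun k _ => (finite_boundedPartitions _ _).image _, finsum_mem_coe_finset]
  refine sum_congr rfl fun k _ => ?_
  rw [finsum_mem_image List.cons_injective.injOn, ← finsum_boundedPartitions_prod,
    mul_finsum_mem' _ _ (finite_boundedPartitions _ _)]
  simp only [List.map_cons, List.prod_cons]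

end CompleteHomogeneous

theorem Function.Periodic.prod_range_add {M : Type*} [CommMonoid M] {f : ℕ → M} {p : ℕ}
    (hf : Function.Periodic f p) (m : ℕ) : ∏ a ∈ range p, f (m + a) = ∏ a ∈ range p, f a := by
  induction m with
  | zero => simp
  | succ m ih =>
    rcases p with _ | q
    · simp
    rw [← ih, prod_range_succ (fun a => f (m + 1 + a)), prod_range_succ' (fun a => f (m + a))]
    congr 1
    · exact prod_congr rfl fun a _ => by rw [add_assoc, add_comm 1 a]
    · rw [add_assoc, add_comm 1 q, hf, add_zero]

theorem PowerSeries.eq_zero_of_forall_X_pow_dvd {R : Type*} [Semiring R] {φ : R⟦X⟧}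
    (h : ∀ N, X ^ N ∣ φ) : φ = 0 :=
  ext fun n => by simpa using X_pow_dvd_iff.mp (h (n + 1)) n n.lt_succ_self

section PerimSeries

variable {R : Type*} [CommRing R] (w : ℕ → R)

noncomputable def completeSeries (m : ℕ) : R⟦X⟧ := mk (completeHom w m)

noncomputable def largestPartSeries (m : ℕ) : R⟦X⟧ := C (w m) * X ^ m * completeSeries w m

noncomputable def perimSeries : R⟦X⟧ :=
  mk fun n => ∑ k ∈ range n, w (k + 1) * completeHom w (k + 1) (n - (k + 1))

noncomputable def partialPerimSeries (N : ℕ) : R⟦X⟧ := ∑ k ∈ range N, largestPartSeries w (k + 1)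

theorem completeSeries_zero : completeSeries w 0 = 1 := by
  ext (_ | n) <;> simp [completeSeries, completeHom, coeff_one]

theorem one_sub_mul_completeSeries_succ (m : ℕ) :
    (1 - C (w (m + 1)) * X) * completeSeries w (m + 1) = completeSeries w m := by
  ext (_ | n)
  · simp [completeSeries, completeHom]
  · simp [completeSeries, completeHom, sub_mul, mul_assoc, coeff_succ_X_mul]

theorem prod_one_sub_mul_completeSeries (m k : ℕ) :
    (∏ a ∈ range k, (1 - C (w (m + a + 1)) * X)) * completeSeries w (m + k) =
      completeSeries w m := by
  induction k with
  | zero => simp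
  | succ k ih =>
    rw [prod_range_succ, mul_assoc, ← add_assoc, one_sub_mul_completeSeries_succ, ih]

theorem X_pow_dvd_perimSeries_sub (N : ℕ) :
    X ^ N ∣ perimSeries w - partialPerimSeries w N := by
  refine X_pow_dvd_iff.mpr fun n hn => ?_
  obtain ⟨r, rfl⟩ := Nat.exists_eq_add_of_le hn.le
  have hcoeff : ∀ k, coeff n (largestPartSeries w (k + 1)) =
      if k + 1 ≤ n then w (k + 1) * completeHom w (k + 1) (n - (k + 1)) else 0 := by
    intro k
    simp only [largestPartSeries, mul_assoc, coeff_C_mul, coeff_X_pow_mul', completeSeries,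
      coeff_mk]
    split_ifs <;> simp
  rw [map_sub, partialPerimSeries, map_sum, sum_range_add, perimSeries, coeff_mk]
  simp only [hcoeff]
  rw [sum_ite_of_true (p := fun k => k + 1 ≤ n) fun k hk => mem_range.mp hk,
    sum_ite_of_false fun k _ => by omega, sum_const_zero, add_zero, sub_self]

variable {w} {p : ℕ}

theorem mul_largestPartSeries_add_period (hw : Function.Periodic w p) (m : ℕ) :
    (∏ a ∈ range p, (1 - C (w (a + 1)) * X)) * largestPartSeries w (m + p) =
      X ^ p * largestPartSeries w m := by
  have hf : Function.Periodic (fun a => (1 - C (w (a + 1)) * X : R⟦X⟧)) p := fun a => by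
    simp only [add_right_comm a p 1, hw (a + 1)]
  rw [← hf.prod_range_add m, largestPartSeries, largestPartSeries, hw m]
  calc _ = C (w m) * X ^ p * X ^ m * ((∏ a ∈ range p, (1 - C (w (m + a + 1)) * X)) *
          completeSeries w (m + p)) := by ring
    _ = _ := by rw [prod_one_sub_mul_completeSeries]; ring

theorem mul_partialPerimSeries_add_period (hw : Function.Periodic w p) (N : ℕ) :
    (∏ a ∈ range p, (1 - C (w (a + 1)) * X)) * partialPerimSeries w (N + p) =
      (∏ a ∈ range p, (1 - C (w (a + 1)) * X)) * partialPerimSeries w p +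
        X ^ p * partialPerimSeries w N := by
  rw [add_comm N, partialPerimSeries, sum_range_add, mul_add]
  congr 1
  rw [partialPerimSeries, mul_sum, mul_sum]
  refine sum_congr rfl fun k _ => ?_
  rw [show p + k + 1 = k + 1 + p by ring, mul_largestPartSeries_add_period hw]

theorem perimSeries_mul_eq (hw : Function.Periodic w p) :
    perimSeries w * ((∏ a ∈ range p, (1 - C (w (a + 1)) * X)) - X ^ p) =
      (∏ a ∈ range p, (1 - C (w (a + 1)) * X)) * partialPerimSeries w p := by
  set B : R⟦X⟧ := ∏ a ∈ range p, (1 - C (w (a + 1)) * X)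
  rw [← sub_eq_zero]
  refine eq_zero_of_forall_X_pow_dvd fun N => ?_
  have hsplit := mul_partialPerimSeries_add_period hw N
  have h₁ : X ^ N ∣ perimSeries w - partialPerimSeries w (N + p) :=
    (pow_dvd_pow X (N.le_add_right p)).trans (X_pow_dvd_perimSeries_sub w (N + p))
  have h₂ := X_pow_dvd_perimSeries_sub w N
  convert (h₁.mul_left B).sub (h₂.mul_left (X ^ p)) using 1
  linear_combination hsplit

end PerimSeries

noncomputable def modWeight (d a : ℕ) : Polynomial ℤ := if a % (d + 1) = 1 then 1 else Polynomial.X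

theorem X_pow_modStat (d : ℕ) (l : List ℕ) :
    Polynomial.X ^ modStat d l = (l.map (modWeight d)).prod := by
  induction l with
  | nil => simp [modStat]
  | cons a l ih =>
    rw [List.map_cons, List.prod_cons, ← ih, modStat, List.countP_cons, pow_add, ← modStat,
      modWeight]
    by_cases h : a % (d + 1) = 1 <;> simp [h, mul_comm]

theorem modWeight_periodic (d : ℕ) : Function.Periodic (modWeight d) (d + 1) := fun a => by
  simp [modWeight]

theorem modWeight_one {d : ℕ} (hd : 1 ≤ d) : modWeight d 1 = 1 := by
  simp [modWeight, Nat.mod_eq_of_lt (by omega : 1 < d + 1)]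

theorem modWeight_of_two_le_of_le {d a : ℕ} (h₂ : 2 ≤ a) (hd : a ≤ d + 1) :
    modWeight d a = Polynomial.X := by
  rcases hd.lt_or_eq with h | rfl
  · simp [modWeight, Nat.mod_eq_of_lt h]
    omega
  · simp [modWeight]

theorem prod_range_one_sub_modWeight {d : ℕ} (hd : 1 ≤ d) {k : ℕ} (hk : k ≤ d) :
    ∏ a ∈ range (k + 1), (1 - C (modWeight d (a + 1)) * X) =
      (1 - X) * (1 - C Polynomial.X * X) ^ k := by
  rw [prod_range_succ', prod_congr rfl fun a ha => by
      rw [modWeight_of_two_le_of_le (by omega) (by have := mem_range.mp ha; omega)],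
    prod_const, card_range, zero_add, modWeight_one hd, map_one, one_mul, mul_comm]

theorem mul_largestPartSeries_modWeight {d : ℕ} (hd : 1 ≤ d) {k : ℕ} (hk : k ≤ d) :
    (1 - X) * (1 - C Polynomial.X * X) ^ d * largestPartSeries (modWeight d) (k + 1) =
      C (modWeight d (k + 1)) * X ^ (k + 1) * (1 - C Polynomial.X * X) ^ (d - k) := by
  have h := prod_one_sub_mul_completeSeries (modWeight d) 0 (k + 1)
  simp only [zero_add, completeSeries_zero] at h
  rw [prod_range_one_sub_modWeight hd hk] at h
  obtain ⟨r, rfl⟩ := Nat.exists_eq_add_of_le hk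
  rw [Nat.add_sub_cancel_left, largestPartSeries]
  linear_combination
    (C (modWeight (k + r) (k + 1)) * X ^ (k + 1) * (1 - C Polynomial.X * X) ^ r) * h

theorem mul_partialPerimSeries_modWeight {d : ℕ} (hd : 1 ≤ d) :
    (1 - X) * (1 - C Polynomial.X * X) ^ d * partialPerimSeries (modWeight d) (d + 1) =
      X * (1 - C Polynomial.X * X) ^ d + C Polynomial.X * X ^ 2 *
        ∑ i ∈ range d, X ^ i * (1 - C Polynomial.X * X) ^ (d - 1 - i) := by
  have hfirst : (1 - X) * (1 - C Polynomial.X * X) ^ d *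
      largestPartSeries (modWeight d) (0 + 1) = X * (1 - C Polynomial.X * X) ^ d := by
    rw [mul_largestPartSeries_modWeight hd d.zero_le, modWeight_one hd, map_one, one_mul,
      zero_add, pow_one, Nat.sub_zero]
  have hrest : ∀ i ∈ range d, (1 - X) * (1 - C Polynomial.X * X) ^ d *
      largestPartSeries (modWeight d) (i + 1 + 1) =
        C Polynomial.X * X ^ 2 * (X ^ i * (1 - C Polynomial.X * X) ^ (d - 1 - i)) := by
    intro i hi
    have hi := mem_range.mp hi
    rw [mul_largestPartSeries_modWeight hd hi, modWeight_of_two_le_of_le (by omega) (by omega),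
      show d - (i + 1) = d - 1 - i by omega, pow_add X i 2]
    ring
  rw [partialPerimSeries, mul_sum, sum_range_succ', sum_congr rfl hrest, hfirst, ← mul_sum,
    add_comm]

theorem gen_fun_mod (d : ℕ) (hd : 1 ≤ d) :
    letI t : Polynomial ℤ := Polynomial.X
    (PowerSeries.mk fun n =>
        ∑ᶠ l ∈ {l : List ℕ | IsPartition l ∧ perim l = n}, t ^ modStat d l) *
      ((1 - PowerSeries.X - PowerSeries.C t * PowerSeries.X) *
        ((1 - PowerSeries.C t * PowerSeries.X) ^ d * (PowerSeries.X - 1)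
          + PowerSeries.X ^ (d + 1))) =
    PowerSeries.X *
      (PowerSeries.C t * PowerSeries.X ^ (d + 1)
        + (1 - PowerSeries.C t * PowerSeries.X) ^ d * (PowerSeries.X - 1)) := by
  have hF : (mk fun n => ∑ᶠ l ∈ {l : List ℕ | IsPartition l ∧ perim l = n},
      (Polynomial.X : Polynomial ℤ) ^ modStat d l) = perimSeries (modWeight d) := by
    simp only [X_pow_modStat, finsum_partitions_perim_prod, perimSeries]
  have key := perimSeries_mul_eq (modWeight_periodic d)
  rw [prod_range_one_sub_modWeight hd le_rfl, mul_partialPerimSeries_modWeight hd] at key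
  have geom := geom_sum₂_mul (X : (Polynomial ℤ)⟦X⟧) (1 - C Polynomial.X * X) d
  rw [hF]
  linear_combination (-(1 - X - C Polynomial.X * X)) * key + (C Polynomial.X * X ^ 2) * geom
end

section
/- For every integer d ≥ 1, the formal power series 1/((1−x)^{d+1} − x^{d+1}) − 1/(1−2x) has nonnegative coefficients. -/
/-!
Let `c N r = ∑_{j ≡ r (mod d+1)} C(N, j)` and `S r = ∑_N c N r xᴺ`. Pascal's rule reads
`(1 - x) S r = x S (r - 1) + [r = 0]`; going once around the residues `d, d-1, …, 0, -1 = d`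
gives `((1 - x)^(d+1) - x^(d+1)) S d = x^d`, so the `n`-th coefficient of the first inverse is
`c (n + d) d`. Every residue class meets `{0, …, d}`, so `c d r ≥ 1`, and Pascal's rule at least
doubles `min_r c N r` at each step; hence `c (n + d) d ≥ 2^n`, the `n`-th coefficient of `1/(1-2x)`.
-/

open PowerSeries

theorem mk_pow_mul_one_sub_C_mul_X {R : Type*} [CommRing R] (a : R) :
    (mk fun n => a ^ n) * (1 - C a * X) = 1 := by
  simpa [rescale_mk, rescale_X] using congrArg (rescale a) (mk_one_mul_one_sub_eq_one (S := R))

/-- Pascal's triangle wrapped around a cylinder of circumference `m`: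
`cyclicBinom m N r = ∑_{j ≡ r (mod m)} C(N, j)`. -/
def cyclicBinom (m : ℕ) : ℕ → ZMod m → ℤ
  | 0, r => if r = 0 then 1 else 0
  | N + 1, r => cyclicBinom m N r + cyclicBinom m N (r - 1)

namespace cyclicBinom

variable {m : ℕ}

theorem nonneg (N : ℕ) (r : ZMod m) : 0 ≤ cyclicBinom m N r := by
  induction N generalizing r with
  | zero => unfold cyclicBinom; split_ifs <;> norm_num
  | succ N ih => exact add_nonneg (ih r) (ih (r - 1))

theorem one_le {N r : ℕ} (h : r ≤ N) : 1 ≤ cyclicBinom m N r := by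
  induction N generalizing r with
  | zero => simp [Nat.le_zero.mp h, cyclicBinom]
  | succ N ih =>
    show 1 ≤ cyclicBinom m N r + cyclicBinom m N (r - 1)
    rcases h.lt_or_eq with h | rfl
    · linarith [ih (Nat.lt_succ_iff.mp h), nonneg N ((r : ZMod m) - 1)]
    · rw [show ((N + 1 : ℕ) : ZMod m) - 1 = N by push_cast; ring]
      linarith [ih le_rfl, nonneg N ((N + 1 : ℕ) : ZMod m)]

theorem two_pow_le (d n : ℕ) (r : ZMod (d + 1)) : 2 ^ n ≤ cyclicBinom (d + 1) (d + n) r := by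
  induction n generalizing r with
  | zero => simpa [ZMod.natCast_zmod_val] using one_le (m := d + 1) (Nat.lt_succ_iff.mp r.val_lt)
  | succ n ih =>
    show _ ≤ cyclicBinom (d + 1) (d + n) r + cyclicBinom (d + 1) (d + n) (r - 1)
    linarith [ih r, ih (r - 1), pow_succ (2 : ℤ) n]

end cyclicBinom

noncomputable def cyclicBinomSeries (m : ℕ) (r : ZMod m) : PowerSeries ℤ :=
  mk fun N => cyclicBinom m N r

namespace cyclicBinomSeries

variable {m : ℕ}

theorem one_sub_X_mul (r : ZMod m) :
    (1 - X) * cyclicBinomSeries m r = X * cyclicBinomSeries m (r - 1) + if r = 0 then 1 else 0 := by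
  ext (_ | n) <;> simp [cyclicBinomSeries, sub_mul, coeff_succ_X_mul, cyclicBinom, apply_ite]

theorem one_sub_X_pow_mul {k : ℕ} (hk : k < m) :
    (1 - X) ^ k * cyclicBinomSeries m k = X ^ k * cyclicBinomSeries m 0 := by
  induction k with
  | zero => simp
  | succ k ih =>
    have hne : ((k + 1 : ℕ) : ZMod m) ≠ 0 := by
      rw [Ne, ZMod.natCast_eq_zero_iff]
      exact fun h => absurd (Nat.le_of_dvd k.succ_pos h) (by omega)
    have hstep := one_sub_X_mul ((k + 1 : ℕ) : ZMod m)
    rw [if_neg hne, add_zero, show ((k + 1 : ℕ) : ZMod m) - 1 = k by push_cast; ring] at hstep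
    calc (1 - X) ^ (k + 1) * cyclicBinomSeries m (k + 1 : ℕ)
        = (1 - X) ^ k * ((1 - X) * cyclicBinomSeries m (k + 1 : ℕ)) := by ring
      _ = X ^ (k + 1) * cyclicBinomSeries m 0 := by
        rw [hstep, mul_left_comm, ih (by omega), pow_succ']; ring

theorem mul_eq_X_pow (d : ℕ) :
    ((1 - X) ^ (d + 1) - X ^ (d + 1)) * cyclicBinomSeries (d + 1) d = X ^ d := by
  have hneg_one : (0 : ZMod (d + 1)) - 1 = d := by
    have := ZMod.natCast_self (d + 1)
    push_cast at this
    linear_combination -this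
  have h0 := one_sub_X_mul (m := d + 1) 0
  rw [if_pos rfl, hneg_one] at h0
  calc ((1 - X) ^ (d + 1) - X ^ (d + 1)) * cyclicBinomSeries (d + 1) d
      = (1 - X) * ((1 - X) ^ d * cyclicBinomSeries (d + 1) d)
          - X ^ (d + 1) * cyclicBinomSeries (d + 1) d := by ring
    _ = X ^ d := by rw [one_sub_X_pow_mul d.lt_succ_self, mul_left_comm, h0]; ring

end cyclicBinomSeries

theorem delta_nonneg_general (d : ℕ) (A B : PowerSeries ℤ)
    (hA : A * ((1 - PowerSeries.X) ^ (d + 1) - PowerSeries.X ^ (d + 1)) = 1)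
    (hB : B * (1 - 2 * PowerSeries.X) = 1) :
    ∀ n, PowerSeries.coeff n B ≤ PowerSeries.coeff n A := by
  have hA_eq : cyclicBinomSeries (d + 1) d = X ^ d * A := by
    linear_combination -cyclicBinomSeries (d + 1) d * hA + A * cyclicBinomSeries.mul_eq_X_pow d
  have hB_eq : B = mk fun n => 2 ^ n := by
    have h2 := mk_pow_mul_one_sub_C_mul_X (2 : ℤ)
    rw [map_ofNat] at h2
    linear_combination (mk fun n => (2 : ℤ) ^ n) * hB - B * h2
  intro n
  have hAn := congrArg (coeff (d + n)) hA_eq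
  rw [cyclicBinomSeries, coeff_mk, coeff_X_pow_mul', if_pos (Nat.le_add_right d n),
    Nat.add_sub_cancel_left] at hAn
  rw [hB_eq, coeff_mk, ← hAn]
  exact cyclicBinom.two_pow_le d n d

theorem delta_nonneg (d : ℕ) (hd : 1 ≤ d) (A B : PowerSeries ℤ)
    (hA : A * ((1 - PowerSeries.X) ^ (d + 1) - PowerSeries.X ^ (d + 1)) = 1)
    (hB : B * (1 - 2 * PowerSeries.X) = 1) :
    ∀ n, PowerSeries.coeff n B ≤ PowerSeries.coeff n A :=
  delta_nonneg_general d A B hA hB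
end

section
/- For every positive integer n and nonnegative integer k, the number of partitions with perimeter n having exactly k repeated part sizes equals the number of partitions with perimeter n having exactly k even part sizes. -/
/-- Number of repeated part sizes: values occurring at least twice. -/
def repSizes (l : List ℕ) : ℕ := l.dedup.countP fun v => 2 ≤ l.count v

/-- Number of even part sizes: even values occurring, without multiplicity. -/
def evenSizes (l : List ℕ) : ℕ := l.dedup.countP fun v => v % 2 = 0

/-!
Every partition of perimeter `n + 1 ≥ 2` arises in exactly one way from a partition of perimeter
`n`: by repeating its largest part (`dupHead`) if that part is repeated, and by increasing it by
one (`incHead`) otherwise. Under either step, the change of `repSizes` depends only on the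
multiplicity of the largest part capped at 3, and the change of `evenSizes` only on its parity and
its multiplicity capped at 2. Splitting the generating polynomials of the two statistics according
to these finitely many states turns them into two transfer-matrix recurrences, and four linear
relations between the two families of state polynomials hold at perimeter 1 and are preserved by
the recurrences. They force the two generating polynomials to coincide.
-/

open Polynomial

lemma isPartition_cons_iff_s19 {x : ℕ} {xs : List ℕ} :
    IsPartition (x :: xs) ↔
      0 < x ∧ (∀ y ∈ xs, y ≤ x) ∧ xs.Pairwise (· ≥ ·) ∧ ∀ y ∈ xs, 0 < y := by
  simp only [IsPartition, ne_eq, reduceCtorEq, not_false_eq_true, List.pairwise_cons,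
    List.mem_cons, forall_eq_or_imp, true_and, ge_iff_le]
  tauto

lemma perim_cons (x : ℕ) (xs : List ℕ) : perim (x :: xs) = x + xs.length := by
  simp [perim]

def dupHead (l : List ℕ) : List ℕ := l.headI :: l

def incHead (l : List ℕ) : List ℕ := (l.headI + 1) :: l.tail

lemma headI_dupHead (l : List ℕ) : (dupHead l).headI = l.headI := rfl

lemma headI_incHead (l : List ℕ) : (incHead l).headI = l.headI + 1 := rfl

lemma IsPartition.dupHead {l : List ℕ} (hl : IsPartition l) : IsPartition (dupHead l) := by
  obtain ⟨x, xs, rfl⟩ := List.exists_cons_of_ne_nil hl.1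
  obtain ⟨hx, hle, -, -⟩ := isPartition_cons_iff_s19.1 hl
  refine isPartition_cons_iff_s19.2 ⟨hx, ?_, hl.2.1, hl.2.2⟩
  simpa using hle

lemma IsPartition.incHead {l : List ℕ} (hl : IsPartition l) : IsPartition (incHead l) := by
  obtain ⟨x, xs, rfl⟩ := List.exists_cons_of_ne_nil hl.1
  obtain ⟨-, hle, hs, hpos⟩ := isPartition_cons_iff_s19.1 hl
  exact isPartition_cons_iff_s19.2 ⟨x.succ_pos, fun y hy => (hle y hy).trans x.le_succ, hs, hpos⟩

lemma perim_dupHead {l : List ℕ} (hl : l ≠ []) : perim (dupHead l) = perim l + 1 := by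
  obtain ⟨x, xs, rfl⟩ := List.exists_cons_of_ne_nil hl
  simp [dupHead, perim_cons, add_assoc]

lemma perim_incHead {l : List ℕ} (hl : l ≠ []) : perim (incHead l) = perim l + 1 := by
  obtain ⟨x, xs, rfl⟩ := List.exists_cons_of_ne_nil hl
  simp [incHead, perim_cons, add_right_comm]

lemma dupHead_injective : Function.Injective dupHead := fun l l' h => by
  simpa [dupHead] using congrArg List.tail h

lemma incHead_injOn : Set.InjOn incHead {l | l ≠ []} := by
  rintro (_ | ⟨x, xs⟩) hl (_ | ⟨y, ys⟩) hl' h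
  all_goals simp_all [incHead]

lemma dupHead_ne_incHead (l : List ℕ) {l' : List ℕ} (hl' : IsPartition l') :
    dupHead l ≠ incHead l' := by
  obtain ⟨y, ys, rfl⟩ := List.exists_cons_of_ne_nil hl'.1
  have hle := (isPartition_cons_iff_s19.1 hl').2.1
  rcases l with _ | ⟨x, xs⟩
  · simp [dupHead, incHead]
  · simp only [dupHead, incHead, List.headI_cons, List.tail_cons]
    rintro ⟨rfl, rfl⟩
    have := hle (y + 1) (by simp)
    omega

lemma IsPartition.of_cons {x y : ℕ} {ys : List ℕ} (h : IsPartition (x :: y :: ys)) :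
    IsPartition (y :: ys) :=
  ⟨List.cons_ne_nil _ _, h.2.1.of_cons, fun a ha => h.2.2 a (List.mem_cons_of_mem _ ha)⟩

lemma exists_dupHead_or_incHead_eq {l : List ℕ} {n : ℕ} (hn : 1 ≤ n) (hl : IsPartition l)
    (hper : perim l = n + 1) :
    ∃ m, IsPartition m ∧ perim m = n ∧ (dupHead m = l ∨ incHead m = l) := by
  obtain ⟨y, ys, rfl⟩ := List.exists_cons_of_ne_nil hl.1
  obtain ⟨hy, hle, hs, hpos⟩ := isPartition_cons_iff_s19.1 hl
  rw [perim_cons] at hper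
  have hdec : incHead ((y - 1) :: ys) = y :: ys := by
    rw [incHead, List.headI_cons, List.tail_cons, Nat.sub_add_cancel hy]
  cases ys with
  | nil =>
    rw [List.length_nil] at hper
    exact ⟨[y - 1], isPartition_cons_iff_s19.2 ⟨by omega, by simp, by simp, by simp⟩,
      by rw [perim_cons, List.length_nil]; omega, .inr hdec⟩
  | cons z zs =>
    rw [List.length_cons] at hper
    rcases (hle z (by simp)).eq_or_lt with rfl | hlt
    · exact ⟨z :: zs, hl.of_cons, by rw [perim_cons]; omega, .inl rfl⟩
    · have hz := hpos z (by simp)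
      refine ⟨(y - 1) :: z :: zs, isPartition_cons_iff_s19.2 ⟨by omega, fun w hw => ?_, hs, hpos⟩,
        by rw [perim_cons, List.length_cons]; omega, .inr hdec⟩
      rcases List.mem_cons.1 hw with rfl | hw
      · omega
      · have := (List.pairwise_cons.1 hs).1 w hw
        omega

def withPerim : ℕ → Finset (List ℕ)
  | 0 => ∅
  | 1 => {[1]}
  | n + 2 => (withPerim (n + 1)).image dupHead ∪ (withPerim (n + 1)).image incHead

lemma mem_withPerim {n : ℕ} {l : List ℕ} : l ∈ withPerim n ↔ IsPartition l ∧ perim l = n := by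
  induction n generalizing l with
  | zero =>
    refine ⟨fun h => by simp [withPerim] at h, fun ⟨hl, hper⟩ => ?_⟩
    obtain ⟨x, xs, rfl⟩ := List.exists_cons_of_ne_nil hl.1
    have := (isPartition_cons_iff_s19.1 hl).1
    rw [perim_cons] at hper
    omega
  | succ n ih =>
    rcases n with _ | n
    · refine ⟨fun h => ?_, fun ⟨hl, hper⟩ => ?_⟩
      · simp only [withPerim, Finset.mem_singleton] at h
        subst h
        exact ⟨isPartition_cons_iff_s19.2 (by simp), rfl⟩
      · obtain ⟨x, xs, rfl⟩ := List.exists_cons_of_ne_nil hl.1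
        have := (isPartition_cons_iff_s19.1 hl).1
        rw [perim_cons] at hper
        obtain rfl : xs = [] := List.eq_nil_of_length_eq_zero (by omega)
        obtain rfl : x = 1 := by omega
        exact Finset.mem_singleton_self _
    · simp only [withPerim, Finset.mem_union, Finset.mem_image, ih]
      constructor
      · rintro (⟨m, ⟨hm, hper⟩, rfl⟩ | ⟨m, ⟨hm, hper⟩, rfl⟩)
        · exact ⟨hm.dupHead, by rw [perim_dupHead hm.1, hper]⟩
        · exact ⟨hm.incHead, by rw [perim_incHead hm.1, hper]⟩
      · rintro ⟨hl, hper⟩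
        obtain ⟨m, hm, hmper, h | h⟩ := exists_dupHead_or_incHead_eq n.succ_pos hl hper
        · exact .inl ⟨m, ⟨hm, hmper⟩, h⟩
        · exact .inr ⟨m, ⟨hm, hmper⟩, h⟩

lemma sum_withPerim_succ {M : Type*} [AddCommMonoid M] {n : ℕ} (hn : 1 ≤ n) (f : List ℕ → M) :
    ∑ l ∈ withPerim (n + 1), f l = ∑ l ∈ withPerim n, (f (dupHead l) + f (incHead l)) := by
  obtain ⟨n, rfl⟩ := Nat.exists_eq_add_of_le' hn
  have hpart {l} (hl : l ∈ withPerim (n + 1)) : IsPartition l := (mem_withPerim.1 hl).1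
  rw [withPerim, Finset.sum_union, Finset.sum_image (dupHead_injective.injOn),
    Finset.sum_image (incHead_injOn.mono fun l hl => (hpart hl).1), Finset.sum_add_distrib]
  simp only [Finset.disjoint_left, Finset.mem_image]
  rintro _ ⟨l, -, rfl⟩ ⟨l', hl', h⟩
  exact dupHead_ne_incHead l (hpart hl') h.symm

lemma repSizes_cons (x : ℕ) (xs : List ℕ) :
    repSizes (x :: xs) = repSizes xs + if xs.count x = 1 then 1 else 0 := by
  have hoff {L : List ℕ} (hL : x ∉ L) :
      L.countP (fun v => 2 ≤ (x :: xs).count v) = L.countP (fun v => 2 ≤ xs.count v) :=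
    List.countP_congr fun v hv => by rw [List.count_cons_of_ne (ne_of_mem_of_not_mem hv hL).symm]
  by_cases hx : x ∈ xs
  · have hperm := List.perm_cons_erase (List.mem_dedup.2 hx)
    rw [repSizes, repSizes, List.dedup_cons_of_mem hx, hperm.countP_eq, hperm.countP_eq,
      List.countP_cons, List.countP_cons, hoff (List.nodup_dedup xs).not_mem_erase]
    have := List.count_pos_iff.2 hx
    simp only [List.count_cons_self, decide_eq_true_eq]
    split_ifs <;> omega
  · rw [repSizes, repSizes, List.dedup_cons_of_notMem hx, List.countP_cons,
      hoff (mt List.mem_dedup.1 hx)]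
    simp [List.count_eq_zero.2 hx]

lemma evenSizes_cons (x : ℕ) (xs : List ℕ) :
    evenSizes (x :: xs) = evenSizes xs + if x % 2 = 0 ∧ x ∉ xs then 1 else 0 := by
  by_cases hx : x ∈ xs
  · simp [evenSizes, List.dedup_cons_of_mem hx, hx]
  · simp [evenSizes, List.dedup_cons_of_notMem hx, List.countP_cons, hx]

def headCount (l : List ℕ) : ℕ := l.count l.headI

lemma one_le_headCount {l : List ℕ} (hl : l ≠ []) : 1 ≤ headCount l := by
  obtain ⟨x, xs, rfl⟩ := List.exists_cons_of_ne_nil hl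
  simp [headCount]

lemma headCount_dupHead (l : List ℕ) : headCount (dupHead l) = headCount l + 1 := by
  simp [headCount, dupHead]

lemma repSizes_dupHead (l : List ℕ) :
    repSizes (dupHead l) = repSizes l + if headCount l = 1 then 1 else 0 := by
  rw [dupHead, repSizes_cons, headCount]

lemma evenSizes_dupHead {l : List ℕ} (hl : l ≠ []) : evenSizes (dupHead l) = evenSizes l := by
  obtain ⟨x, xs, rfl⟩ := List.exists_cons_of_ne_nil hl
  simp [dupHead, evenSizes_cons x (x :: xs)]

lemma succ_head_not_mem_tail {x : ℕ} {xs : List ℕ} (hl : IsPartition (x :: xs)) : x + 1 ∉ xs :=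
  fun h => by have := (isPartition_cons_iff_s19.1 hl).2.1 _ h; omega

lemma headCount_incHead {l : List ℕ} (hl : IsPartition l) : headCount (incHead l) = 1 := by
  obtain ⟨x, xs, rfl⟩ := List.exists_cons_of_ne_nil hl.1
  simp [headCount, incHead, List.count_eq_zero.2 (succ_head_not_mem_tail hl)]

lemma repSizes_incHead {l : List ℕ} (hl : IsPartition l) :
    repSizes (incHead l) + (if headCount l = 2 then 1 else 0) = repSizes l := by
  obtain ⟨x, xs, rfl⟩ := List.exists_cons_of_ne_nil hl.1
  simp [headCount, incHead, repSizes_cons, List.count_eq_zero.2 (succ_head_not_mem_tail hl)]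

lemma evenSizes_incHead {l : List ℕ} (hl : IsPartition l) :
    evenSizes (incHead l) + (if l.headI % 2 = 0 ∧ headCount l = 1 then 1 else 0) =
      evenSizes l + l.headI % 2 := by
  obtain ⟨x, xs, rfl⟩ := List.exists_cons_of_ne_nil hl.1
  simp only [headCount, incHead, List.headI_cons, List.tail_cons, evenSizes_cons,
    succ_head_not_mem_tail hl, List.count_cons_self, not_false_eq_true, and_true]
  by_cases hx : x ∈ xs
  · have := List.count_pos_iff.2 hx
    simp only [hx, not_true_eq_false, and_false, if_false]
    split_ifs <;> omega
  · simp only [hx, List.count_eq_zero.2 hx, not_false_eq_true, and_true]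
    split_ifs <;> omega

section TransferMatrix

variable {S : Type*} [DecidableEq S] (σ : List ℕ → S) (w : List ℕ → ℕ)

noncomputable def statePoly (n : ℕ) (s : S) : ℕ[X] :=
  ∑ l ∈ withPerim n, if σ l = s then X ^ w l else 0

variable {σ w}

lemma sum_withPerim_eq_sum_statePoly {T : Finset S} (hT : ∀ {l}, IsPartition l → σ l ∈ T)
    (n : ℕ) (F : S → ℕ[X]) :
    ∑ l ∈ withPerim n, F (σ l) * X ^ w l = ∑ s ∈ T, F s * statePoly σ w n s := by
  simp only [statePoly, Finset.mul_sum, mul_ite, mul_zero]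
  rw [Finset.sum_comm]
  refine Finset.sum_congr rfl fun l hl => ?_
  rw [Finset.sum_ite_eq, if_pos (hT (mem_withPerim.1 hl).1)]

lemma statePoly_succ {T : Finset S} (hT : ∀ {l}, IsPartition l → σ l ∈ T)
    {δV δH : S → S} {aV aH : S → ℕ}
    (hV : ∀ {l}, IsPartition l → σ (dupHead l) = δV (σ l) ∧ w (dupHead l) = w l + aV (σ l))
    (hH : ∀ {l}, IsPartition l → σ (incHead l) = δH (σ l) ∧ w (incHead l) = w l + aH (σ l))
    {n : ℕ} (hn : 1 ≤ n) (s : S) :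
    statePoly σ w (n + 1) s = ∑ s₀ ∈ T,
      ((if δV s₀ = s then X ^ aV s₀ else 0) + (if δH s₀ = s then X ^ aH s₀ else 0)) *
        statePoly σ w n s₀ := by
  rw [← sum_withPerim_eq_sum_statePoly hT, statePoly, sum_withPerim_succ hn]
  refine Finset.sum_congr rfl fun l hl => ?_
  obtain ⟨hσV, hwV⟩ := hV (mem_withPerim.1 hl).1
  obtain ⟨hσH, hwH⟩ := hH (mem_withPerim.1 hl).1
  simp only [hσV, hwV, hσH, hwH, pow_add, add_mul, ite_mul, zero_mul, mul_comm (X ^ w l)]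

end TransferMatrix

def repState (l : List ℕ) : ℕ := min (headCount l) 3

def evenState (l : List ℕ) : ℕ × ℕ := (l.headI % 2, min (headCount l) 2)

/- Both weights are shifted by one when the largest part is simple (resp. odd), so that neither
step `dupHead`, `incHead` ever lowers them. -/
def repWeight (l : List ℕ) : ℕ := repSizes l + if headCount l = 1 then 1 else 0

def evenWeight (l : List ℕ) : ℕ := evenSizes l + l.headI % 2

lemma repState_mem {l : List ℕ} (hl : IsPartition l) : repState l ∈ ({1, 2, 3} : Finset ℕ) := by
  have := one_le_headCount hl.1
  simp only [repState, Finset.mem_insert, Finset.mem_singleton]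
  omega

lemma evenState_mem {l : List ℕ} (hl : IsPartition l) :
    evenState l ∈ ({0, 1} : Finset ℕ) ×ˢ ({1, 2} : Finset ℕ) := by
  have := one_le_headCount hl.1
  simp only [evenState, Finset.mem_product, Finset.mem_insert, Finset.mem_singleton]
  omega

lemma repState_repWeight_dupHead {l : List ℕ} (hl : IsPartition l) :
    repState (dupHead l) = min (repState l + 1) 3 ∧ repWeight (dupHead l) = repWeight l := by
  have := one_le_headCount hl.1
  simp only [repState, repWeight, headCount_dupHead, repSizes_dupHead]
  exact ⟨by omega, by split_ifs <;> omega⟩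

lemma repState_repWeight_incHead {l : List ℕ} (hl : IsPartition l) :
    repState (incHead l) = 1 ∧
      repWeight (incHead l) = repWeight l + if repState l = 3 then 1 else 0 := by
  have hrep := repSizes_incHead hl
  have := one_le_headCount hl.1
  simp only [repState, repWeight, headCount_incHead hl]
  exact ⟨rfl, by grind⟩

lemma evenState_evenWeight_dupHead {l : List ℕ} (hl : IsPartition l) :
    evenState (dupHead l) = ((evenState l).1, 2) ∧ evenWeight (dupHead l) = evenWeight l := by
  have := one_le_headCount hl.1
  simp only [evenState, evenWeight, headCount_dupHead, evenSizes_dupHead hl.1, headI_dupHead,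
    Prod.mk.injEq, true_and, and_true]
  omega

lemma evenState_evenWeight_incHead {l : List ℕ} (hl : IsPartition l) :
    evenState (incHead l) = (1 - (evenState l).1, 1) ∧
      evenWeight (incHead l) = evenWeight l + if evenState l = (0, 2) then 1 else 0 := by
  have heven := evenSizes_incHead hl
  have := one_le_headCount hl.1
  simp only [evenState, evenWeight, headCount_incHead hl, headI_incHead, Prod.mk.injEq]
  exact ⟨by omega, by grind⟩

local notation "R" => statePoly repState repWeight
local notation "E" => statePoly evenState evenWeight

lemma statePoly_repState_succ {n : ℕ} (hn : 1 ≤ n) :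
    R (n + 1) 1 = R n 1 + R n 2 + X * R n 3 ∧ R (n + 1) 2 = R n 1 ∧
      R (n + 1) 3 = R n 2 + R n 3 := by
  have h := statePoly_succ (δV := fun s => min (s + 1) 3) (δH := fun _ => 1) (aV := fun _ => 0)
    (aH := fun s => if s = 3 then 1 else 0) repState_mem repState_repWeight_dupHead
    repState_repWeight_incHead hn
  simp [h, add_assoc]

lemma statePoly_evenState_succ {n : ℕ} (hn : 1 ≤ n) :
    E (n + 1) (0, 1) = E n (1, 1) + E n (1, 2) ∧ E (n + 1) (1, 1) = E n (0, 1) + X * E n (0, 2) ∧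
      E (n + 1) (0, 2) = E n (0, 1) + E n (0, 2) ∧ E (n + 1) (1, 2) = E n (1, 1) + E n (1, 2) := by
  have h := statePoly_succ (δV := fun s => (s.1, 2)) (δH := fun s => (1 - s.1, 1))
    (aV := fun _ => 0) (aH := fun s => if s = (0, 2) then 1 else 0) evenState_mem
    evenState_evenWeight_dupHead evenState_evenWeight_incHead hn
  simp [h, Finset.sum_product]

lemma statePoly_repState_eq_evenState {n : ℕ} (hn : 1 ≤ n) :
    R n 1 = E n (1, 1) + E n (1, 2) ∧ R n 2 = E n (1, 2) ∧ R n 3 = E n (0, 2) ∧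
      E n (0, 1) = E n (1, 2) := by
  induction n, hn using Nat.le_induction with
  | base =>
    simp [statePoly, withPerim, repState, repWeight, evenState, evenWeight, headCount, repSizes,
      evenSizes]
  | succ n hn ih =>
    obtain ⟨h1, h2, h3, h4⟩ := ih
    obtain ⟨r1, r2, r3⟩ := statePoly_repState_succ hn
    obtain ⟨e01, e11, e02, e12⟩ := statePoly_evenState_succ hn
    rw [r1, r2, r3, e01, e11, e02, e12, h1, h2, h3, h4]
    exact ⟨by ring, rfl, rfl, rfl⟩

lemma X_mul_sum_X_pow_repSizes (n : ℕ) :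
    X * ∑ l ∈ withPerim n, X ^ repSizes l = R n 1 + X * (R n 2 + R n 3) := by
  have hshift (l) (hl : l ∈ withPerim n) :
      (X : ℕ[X]) * X ^ repSizes l = X ^ (if 2 ≤ repState l then 1 else 0) * X ^ repWeight l := by
    have := one_le_headCount (mem_withPerim.1 hl).1.1
    rw [← pow_succ', ← pow_add, repState, repWeight]
    congr 1
    split_ifs <;> omega
  rw [Finset.mul_sum, Finset.sum_congr rfl hshift,
    sum_withPerim_eq_sum_statePoly repState_mem n fun s => X ^ if 2 ≤ s then 1 else 0]
  simp [mul_add]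

lemma X_mul_sum_X_pow_evenSizes (n : ℕ) :
    X * ∑ l ∈ withPerim n, X ^ evenSizes l =
      X * (E n (0, 1) + E n (0, 2)) + (E n (1, 1) + E n (1, 2)) := by
  have hshift (l) (_ : l ∈ withPerim n) :
      (X : ℕ[X]) * X ^ evenSizes l = X ^ (1 - (evenState l).1) * X ^ evenWeight l := by
    rw [← pow_succ', ← pow_add, evenState, evenWeight]
    congr 1
    omega
  rw [Finset.mul_sum, Finset.sum_congr rfl hshift,
    sum_withPerim_eq_sum_statePoly evenState_mem n fun s => X ^ (1 - s.1)]
  simp [Finset.sum_product, mul_add]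

lemma sum_X_pow_repSizes_eq_sum_X_pow_evenSizes (n : ℕ) :
    (∑ l ∈ withPerim n, X ^ repSizes l : ℕ[X]) = ∑ l ∈ withPerim n, X ^ evenSizes l := by
  rcases Nat.eq_zero_or_pos n with rfl | hn
  · simp [withPerim]
  obtain ⟨h1, h2, h3, h4⟩ := statePoly_repState_eq_evenState hn
  refine mul_left_cancel₀ (X_ne_zero : (X : ℕ[X]) ≠ 0) ?_
  rw [X_mul_sum_X_pow_repSizes, X_mul_sum_X_pow_evenSizes, h1, h2, h3, h4]
  ring

lemma ncard_perim_eq_coeff (f : List ℕ → ℕ) (n k : ℕ) :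
    {l : List ℕ | IsPartition l ∧ perim l = n ∧ f l = k}.ncard =
      (∑ l ∈ withPerim n, X ^ f l : ℕ[X]).coeff k := by
  have : {l : List ℕ | IsPartition l ∧ perim l = n ∧ f l = k} =
      ↑((withPerim n).filter (f · = k)) := by
    ext l
    simp [mem_withPerim, and_assoc]
  rw [this, Set.ncard_coe_finset, finsetSum_coeff]
  simp only [coeff_X_pow]
  rw [Finset.sum_boole]
  simp [eq_comm]

theorem repSizes_eq_evenSizes_general (n k : ℕ) :
    {l : List ℕ | IsPartition l ∧ perim l = n ∧ repSizes l = k}.ncard =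
    {l : List ℕ | IsPartition l ∧ perim l = n ∧ evenSizes l = k}.ncard := by
  rw [ncard_perim_eq_coeff, ncard_perim_eq_coeff, sum_X_pow_repSizes_eq_sum_X_pow_evenSizes]

theorem repSizes_eq_evenSizes (n k : ℕ) (hn : 1 ≤ n) :
    {l : List ℕ | IsPartition l ∧ perim l = n ∧ repSizes l = k}.ncard =
    {l : List ℕ | IsPartition l ∧ perim l = n ∧ evenSizes l = k}.ncard :=
  repSizes_eq_evenSizes_general n k
end
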